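/- arXiv:2507.04273 — 3 statements merged into one kernel-verified Lean document; each statement's English description precedes it below -/
import Mathlib

section
/- Let 0 < σ < 1 and let n be sufficiently large (depending on σ). Let G be an oriented graph on n vertices satisfying the Ore-degree condition: deg⁺(x) + deg⁻(y) ≥ (3n-3)/4 whenever xy ∉ E(G). If X ⊆ V(G) satisfies e(X) ≤ σn², where e(X) is the number of edges of G with both endpoints in X, then |X| ≤ n/4 + 21σn. -/
open Finset

/-- Out-degree of a vertex in a digraph given by an edge relation. -/
def degPlus {V : Type} [Fintype V] (E : V → V → Prop) [DecidableRel E] (x : V) : ℕ :=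
  (Finset.univ.filter fun y => E x y).card

/-- In-degree of a vertex in a digraph given by an edge relation. -/
def degMinus {V : Type} [Fintype V] (E : V → V → Prop) [DecidableRel E] (x : V) : ℕ :=
  (Finset.univ.filter fun y => E y x).card

/-- An oriented graph: no loops and no 2-cycles. -/
def Oriented {V : Type} (E : V → V → Prop) : Prop :=
  (∀ x, ¬ E x x) ∧ ∀ x y, E x y → ¬ E y x

/-- Number of edges with both endpoints in `X`. -/
def edgesIn {V : Type} [DecidableEq V] (E : V → V → Prop) [DecidableRel E] (X : Finset V) : ℕ :=
  ((X ×ˢ X).filter fun p => E p.1 p.2).card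

lemma arith_aux (σ n m e : ℝ) (hσ : 0 < σ) (hσ' : σ < 1/28) (hn : 25 ≤ σ*n)
    (hn0 : 0 < n)
    (hm : m ≤ n) (he : 0 ≤ e) (he2 : e ≤ σ*n^2)
    (hA : (m*m - m - e)*(3*n-3) ≤ 4*(m*(2*e + m*(n-m))))
    (hlt : n/4 + 21*σ*n < m) : False := by
  nlinarith [mul_pos (sub_pos.2 hlt) (sub_pos.2 hlt), sq_nonneg (m - n/4 - 21*σ*n),
    mul_nonneg (mul_nonneg hσ.le hn0.le) (sub_pos.2 hlt).le,
    mul_nonneg (sub_nonneg.2 hm) (sub_pos.2 hlt).le,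
    mul_nonneg (mul_nonneg hσ.le hn0.le) (mul_nonneg hn0.le hn0.le),
    mul_nonneg (mul_nonneg (sub_pos.2 hlt).le (sub_pos.2 hlt).le) hn0.le,
    mul_nonneg (mul_nonneg (sub_pos.2 hlt).le (sub_pos.2 hlt).le) (sub_pos.2 hlt).le,
    mul_nonneg (mul_nonneg hσ.le hσ.le) (mul_nonneg (mul_nonneg hn0.le hn0.le) hn0.le),
    mul_nonneg (mul_nonneg hσ.le hn0.le) (mul_nonneg hn0.le (sub_pos.2 hlt).le)]

section comb
variable {V : Type} [Fintype V] [DecidableEq V] (E : V → V → Prop) [DecidableRel E] (X : Finset V)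

lemma comb_out : ∑ x ∈ X, (X.filter fun y => E x y).card = edgesIn E X := by
  rw [edgesIn, Finset.card_filter, Finset.sum_product]
  refine Finset.sum_congr rfl fun x _ => ?_
  rw [Finset.card_filter]

lemma comb_in : ∑ x ∈ X, (X.filter fun y => E y x).card = edgesIn E X := by
  rw [edgesIn, Finset.card_filter, Finset.sum_product, Finset.sum_comm]
  refine Finset.sum_congr rfl fun x _ => ?_
  rw [Finset.card_filter]

lemma comb_deg (hor : Oriented E) (x : V) :
    degPlus E x + degMinus E x ≤
      (X.filter fun y => E x y).card + (X.filter fun y => E y x).card + (Fintype.card V - X.card) := by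
  have hsplit1 : (Finset.univ.filter fun y => E x y).card
      = (X.filter fun y => E x y).card + (Xᶜ.filter fun y => E x y).card := by
    rw [← Finset.card_union_of_disjoint (Finset.disjoint_filter_filter disjoint_compl_right),
      ← Finset.filter_union, Finset.union_compl]
  have hsplit2 : (Finset.univ.filter fun y => E y x).card
      = (X.filter fun y => E y x).card + (Xᶜ.filter fun y => E y x).card := by
    rw [← Finset.card_union_of_disjoint (Finset.disjoint_filter_filter disjoint_compl_right),
      ← Finset.filter_union, Finset.union_compl]
  have hdisj : Disjoint (Xᶜ.filter fun y => E x y) (Xᶜ.filter fun y => E y x) := by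
    rw [Finset.disjoint_left]
    intro a ha hb
    exact hor.2 x a (Finset.mem_filter.1 ha).2 (Finset.mem_filter.1 hb).2
  have hle : (Xᶜ.filter fun y => E x y).card + (Xᶜ.filter fun y => E y x).card ≤ Xᶜ.card := by
    rw [← Finset.card_union_of_disjoint hdisj]
    exact Finset.card_le_card (Finset.union_subset (Finset.filter_subset _ _) (Finset.filter_subset _ _))
  have hcompl : Xᶜ.card = Fintype.card V - X.card := by
    rw [Finset.card_compl]
  rw [degPlus, degMinus, hsplit1, hsplit2]
  omega

lemma comb_sum (hor : Oriented E) :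
    ∑ p ∈ X ×ˢ X, (degPlus E p.1 + degMinus E p.2) ≤
      X.card * (2 * edgesIn E X + X.card * (Fintype.card V - X.card)) := by
  have h1 : ∑ p ∈ X ×ˢ X, (degPlus E p.1 + degMinus E p.2)
      = X.card * ∑ x ∈ X, (degPlus E x + degMinus E x) := by
    rw [Finset.sum_product]
    simp only [Finset.sum_add_distrib, Finset.sum_const, smul_eq_mul]
    rw [mul_add, Finset.mul_sum, Finset.mul_sum]
  rw [h1]
  refine Nat.mul_le_mul_left _ ?_
  calc ∑ x ∈ X, (degPlus E x + degMinus E x)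
      ≤ ∑ x ∈ X, ((X.filter fun y => E x y).card + (X.filter fun y => E y x).card
          + (Fintype.card V - X.card)) :=
        Finset.sum_le_sum fun x _ => comb_deg E X hor x
    _ = (∑ x ∈ X, (X.filter fun y => E x y).card) + (∑ x ∈ X, (X.filter fun y => E y x).card)
          + X.card * (Fintype.card V - X.card) := by
        rw [Finset.sum_add_distrib, Finset.sum_add_distrib, Finset.sum_const, smul_eq_mul]
    _ = 2 * edgesIn E X + X.card * (Fintype.card V - X.card) := by
        rw [comb_out, comb_in]; ring

lemma comb_card (hor : Oriented E) :
    (X.offDiag.filter fun p => ¬ E p.1 p.2).card + edgesIn E X = X.card * X.card - X.card := by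
  have h1 : X.offDiag.filter (fun p => E p.1 p.2) = (X ×ˢ X).filter fun p => E p.1 p.2 := by
    ext p
    simp only [Finset.mem_filter, Finset.mem_offDiag, Finset.mem_product]
    constructor
    · rintro ⟨⟨h1, h2, _⟩, h4⟩; exact ⟨⟨h1, h2⟩, h4⟩
    · rintro ⟨⟨h1, h2⟩, h4⟩
      refine ⟨⟨h1, h2, fun hne => ?_⟩, h4⟩
      exact hor.1 p.1 (hne ▸ h4)
  have h2 := Finset.card_filter_add_card_filter_not (s := X.offDiag)
    (fun p => E p.1 p.2)
  rw [h1, Finset.offDiag_card] at h2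
  rw [← h2, edgesIn]
  omega

end comb

theorem stmt_1 :
    ∀ σ : ℝ, 0 < σ → σ < 1 → ∃ n₀ : ℕ, ∀ n : ℕ, n ≥ n₀ →
    ∀ (V : Type) [Fintype V] [DecidableEq V] (E : V → V → Prop) [DecidableRel E],
      Fintype.card V = n → Oriented E →
      (∀ x y : V, x ≠ y → ¬ E x y →
        ((degPlus E x : ℝ) + (degMinus E y : ℝ)) ≥ (3 * n - 3) / 4) →
      ∀ X : Finset V, (edgesIn E X : ℝ) ≤ σ * n ^ 2 →
        (X.card : ℝ) ≤ n / 4 + 21 * σ * n := by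
  intro σ hσ hσ1
  refine ⟨⌈(25:ℝ)/σ⌉₊, ?_⟩
  intro n hn V _ _ E _ hcard hor hOre X heX
  have hmn : X.card ≤ n := by
    rw [← hcard, ← Finset.card_univ]; exact Finset.card_le_univ X
  have hmnR : (X.card : ℝ) ≤ n := Nat.cast_le.2 hmn
  have hnR : (25:ℝ)/σ ≤ n := Nat.ceil_le.1 hn
  have hσn : (25:ℝ) ≤ σ * n := by
    rw [div_le_iff₀ hσ] at hnR; linarith
  have hn0 : (0:ℝ) < n := by nlinarith
  by_cases hσ28 : (1:ℝ)/28 ≤ σ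
  · nlinarith [mul_le_mul_of_nonneg_right hσ28 hn0.le]
  push_neg at hσ28
  by_contra hlt
  push_neg at hlt
  set m := X.card with hm
  set e := edgesIn E X with he
  set P := X.offDiag.filter fun p => ¬ E p.1 p.2 with hPdef
  have hPm : P ⊆ X ×ˢ X := by
    intro p hp
    have h := (Finset.mem_filter.1 hp).1
    have h2 := Finset.mem_offDiag.1 h
    exact Finset.mem_product.2 ⟨h2.1, h2.2.1⟩
  have hchain : (P.card : ℝ) * ((3*(n:ℝ)-3)/4) ≤ (m:ℝ) * (2*(e:ℝ) + (m:ℝ)*((n:ℝ)-(m:ℝ))) := by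
    calc (P.card : ℝ) * ((3*(n:ℝ)-3)/4)
        ≤ ∑ p ∈ P, ((degPlus E p.1 : ℝ) + (degMinus E p.2 : ℝ)) := by
          have h := Finset.card_nsmul_le_sum P
            (fun p => ((degPlus E p.1 : ℝ) + (degMinus E p.2 : ℝ))) ((3*(n:ℝ)-3)/4) ?_
          · rwa [nsmul_eq_mul] at h
          · intro p hp
            obtain ⟨hpd, hne⟩ := Finset.mem_filter.1 hp
            obtain ⟨_, _, h3⟩ := Finset.mem_offDiag.1 hpd
            exact hOre p.1 p.2 h3 hne
      _ = ((∑ p ∈ P, (degPlus E p.1 + degMinus E p.2) : ℕ) : ℝ) := by push_cast; rfl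
      _ ≤ ((∑ p ∈ X ×ˢ X, (degPlus E p.1 + degMinus E p.2) : ℕ) : ℝ) := by
          exact_mod_cast Finset.sum_le_sum_of_subset hPm
      _ ≤ ((m * (2 * e + m * (n - m)) : ℕ) : ℝ) := by
          have h := comb_sum E X hor
          rw [hcard] at h
          exact_mod_cast h
      _ = (m:ℝ) * (2*(e:ℝ) + (m:ℝ)*((n:ℝ)-(m:ℝ))) := by
          push_cast [Nat.cast_sub hmn]; ring
  have hmm : m ≤ m * m := by
    rcases Nat.eq_zero_or_pos m with h | h
    · simp [h]
    · exact Nat.le_mul_of_pos_left _ h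
  have hPcard : (P.card : ℝ) = (m:ℝ)*(m:ℝ) - (m:ℝ) - (e:ℝ) := by
    have h := comb_card E X hor
    rw [← hm, ← he, ← hPdef] at h
    have : ((P.card + e : ℕ) : ℝ) = ((m*m - m : ℕ) : ℝ) := by exact congrArg (fun k : ℕ => (k:ℝ)) h
    rw [Nat.cast_sub hmm] at this
    push_cast at this
    linarith
  have hPe : (0:ℝ) ≤ (m:ℝ)*(m:ℝ) - (m:ℝ) - (e:ℝ) := by
    rw [← hPcard]; positivity
  have hA : ((m:ℝ)*(m:ℝ) - (m:ℝ) - (e:ℝ))*(3*(n:ℝ)-3) ≤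
      4*((m:ℝ)*(2*(e:ℝ) + (m:ℝ)*((n:ℝ)-(m:ℝ)))) := by
    rw [← hPcard]
    linarith [hchain]
  exact arith_aux σ n m e hσ hσ28 hσn hn0 hmnR (Nat.cast_nonneg e) heX hA hlt
end

section
/- Let G be an oriented graph on n vertices satisfying the Ore-degree condition deg⁺(x) + deg⁻(y) ≥ (3n-3)/4 whenever xy ∉ E(G). Then for every pair of distinct vertices (u,v) with uv ∉ E(G), there exists an integer k with 1 ≤ k ≤ 3 such that G contains at least 2^{-24} n^k directed paths from u to v of length exactly k+1 (i.e., with exactly k internal vertices). -/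
open Finset

/-- Number of directed `(u,v)`-paths of length `k+1`, i.e. with exactly `k` internal
vertices: sequences `u = w 0, w 1, …, w (k+1) = v` of distinct vertices with consecutive
edges. -/
def pathCount {V : Type} [Fintype V] [DecidableEq V] (E : V → V → Prop) [DecidableRel E]
    (u v : V) (k : ℕ) : ℕ :=
  (Finset.univ.filter fun w : Fin (k + 2) → V =>
    w 0 = u ∧ w (Fin.last (k + 1)) = v ∧ Function.Injective w ∧
      ∀ i : Fin (k + 1), E (w i.castSucc) (w i.succ)).card

/-!
Write `A = N⁺(u)`, `B = N⁻(v)`, `i = |A ∩ B|` and `e` for the number of edges from `A` to `B`.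
As `uv ∉ E` and there are no 2-cycles, every `u`–`v` walk with at most three inner vertices is a
path, so there are at least `i`, `e` and `∑_{x ∈ A, y ∈ B} |N⁺(x) ∩ N⁻(y)|` paths with one, two
and three inner vertices. If `i` and `e` are both small, the Ore condition applies to almost all
pairs `(x, y) ∈ A × B`; outside `A ∪ B` the sets `N⁺(x)` and `N⁻(y)` must then overlap in about
`|A|/2 + |B|/2 - n/4 ≥ n/8` vertices on average, because the no-2-cycle condition leaves only
`|A|/2` (resp. `|B|/2`) room for them inside `A` (resp. `B`). Applying the Ore condition to `u` and
each of its non-out-neighbours and counting edges gives `|A|, |B| ≥ n/8`, so the sum is of order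
`n³`. For small `n` the same estimate, with `i = e = 0`, still yields one path.
-/

namespace Oriented

variable {V : Type} {E : V → V → Prop}

lemma ne_of_adj (hE : Oriented E) {x y : V} (h : E x y) : x ≠ y := by
  rintro rfl; exact hE.1 x h

lemma ne_of_adj_adj (hE : Oriented E) {x y z : V} (hxy : E x y) (hyz : E y z) : x ≠ z := by
  rintro rfl; exact hE.2 x y hxy hyz

end Oriented

section Neighbourhoods

variable {V : Type} [Fintype V] (E : V → V → Prop) [DecidableRel E]

def outNbhd (x : V) : Finset V := {y | E x y}

def inNbhd (y : V) : Finset V := {x | E x y}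

@[simp] lemma mem_outNbhd {x y : V} : y ∈ outNbhd E x ↔ E x y := by simp [outNbhd]

@[simp] lemma mem_inNbhd {x y : V} : x ∈ inNbhd E y ↔ E x y := by simp [inNbhd]

lemma card_outNbhd (x : V) : #(outNbhd E x) = degPlus E x := rfl

lemma card_inNbhd (y : V) : #(inNbhd E y) = degMinus E y := rfl

end Neighbourhoods

section EdgesBetween

variable {V : Type} (E : V → V → Prop) [DecidableRel E]

def edgesBetween (X Y : Finset V) : Finset (V × V) := {p ∈ X ×ˢ Y | E p.1 p.2}

lemma sum_card_inter_outNbhd [Fintype V] [DecidableEq V] (X Y : Finset V) :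
    ∑ x ∈ X, #(outNbhd E x ∩ Y) = #(edgesBetween E X Y) := by
  rw [edgesBetween, card_filter, sum_product]
  refine sum_congr rfl fun x _ => ?_
  rw [← card_filter, inter_comm, outNbhd, inter_filter, inter_univ]

lemma sum_card_inter_inNbhd [Fintype V] [DecidableEq V] (X Y : Finset V) :
    ∑ y ∈ Y, #(inNbhd E y ∩ X) = #(edgesBetween E X Y) := by
  rw [edgesBetween, card_filter, sum_product_right]
  refine sum_congr rfl fun y _ => ?_
  rw [← card_filter, inter_comm, inNbhd, inter_filter, inter_univ]

variable {E}

lemma card_filter_eq_or_adj_le [DecidableEq V] (A B : Finset V) :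
    #{p ∈ A ×ˢ B | p.1 = p.2 ∨ E p.1 p.2} ≤ #(A ∩ B) + #(edgesBetween E A B) := by
  rw [filter_or]
  refine (card_union_le _ _).trans (add_le_add ?_ le_rfl)
  refine card_le_card_of_injOn Prod.fst (fun p hp => ?_) fun p hp q hq h => ?_
  · simp only [mem_coe, mem_filter, mem_product] at hp
    simp [hp.1.1, hp.2 ▸ hp.1.2]
  · simp only [mem_coe, mem_filter] at hp hq
    exact Prod.ext h (hp.2 ▸ hq.2 ▸ h)

lemma Oriented.card_edgesBetween_self_le (hE : Oriented E) (X : Finset V) :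
    #(edgesBetween E X X) ≤ (#X).choose 2 := by
  classical
  have hoff : edgesBetween E X X ∪ (edgesBetween E X X).image Prod.swap ⊆ X.offDiag := by
    refine union_subset (fun p hp => ?_) (image_subset_iff.2 fun p hp => ?_) <;>
      simp only [edgesBetween, mem_filter, mem_product] at hp <;>
      simp only [mem_offDiag, Prod.fst_swap, Prod.snd_swap]
    · exact ⟨hp.1.1, hp.1.2, hE.ne_of_adj hp.2⟩
    · exact ⟨hp.1.2, hp.1.1, (hE.ne_of_adj hp.2).symm⟩
  have hdisj : Disjoint (edgesBetween E X X) ((edgesBetween E X X).image Prod.swap) := by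
    simp only [disjoint_left, mem_image, edgesBetween, mem_filter, not_exists, not_and]
    rintro p hp q hq rfl
    exact hE.2 _ _ hq.2 hp.2
  have h := card_le_card hoff
  rw [card_union_of_disjoint hdisj, card_image_of_injective _ Prod.swap_injective,
    offDiag_card, ← Nat.mul_sub_one] at h
  rw [Nat.choose_two_right]
  omega

lemma Oriented.cast_card_edgesBetween_self_le [Fintype V] [DecidableEq V] (hE : Oriented E)
    (X : Finset V) :
    (#(edgesBetween E X X) : ℝ) ≤ #X * (#X - 1) / 2 := by
  rw [← Nat.cast_choose_two]
  exact_mod_cast hE.card_edgesBetween_self_le X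

lemma Oriented.sum_degMinus_le (hE : Oriented E) [Fintype V] [DecidableEq V] :
    ∑ y, degMinus E y ≤ (Fintype.card V).choose 2 := by
  simpa [← card_inNbhd, ← sum_card_inter_inNbhd] using hE.card_edgesBetween_self_le univ

end EdgesBetween

section Counting

variable {V : Type} [Fintype V] [DecidableEq V]

lemma card_add_two_le_card {s : Finset V} {u v : V} (huv : u ≠ v) (hu : u ∉ s) (hv : v ∉ s) :
    #s + 2 ≤ Fintype.card V := by
  have h := card_le_univ (insert u (insert v s))
  rwa [card_insert_of_notMem (by simp [huv, hu]), card_insert_of_notMem hv] at h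

lemma card_add_card_le (S T A B : Finset V) :
    #S + #T ≤ #(S ∩ T) + #(A ∪ B)ᶜ + (#(S ∩ A) + #(S ∩ B)) + (#(T ∩ A) + #(T ∩ B)) := by
  have hST := card_union_add_card_inter S T
  have hsplit := card_sdiff_add_card_inter (S ∪ T) (A ∪ B)
  have hout : #((S ∪ T) \ (A ∪ B)) ≤ #(A ∪ B)ᶜ :=
    card_le_card (by rw [sdiff_eq_inter_compl]; exact inter_subset_right)
  have hin : #((S ∪ T) ∩ (A ∪ B)) ≤ #(S ∩ A) + #(S ∩ B) + (#(T ∩ A) + #(T ∩ B)) := by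
    rw [union_inter_distrib_right, inter_union_distrib_left, inter_union_distrib_left]
    exact (card_union_le _ _).trans
      (add_le_add (card_union_le _ _) (card_union_le _ _))
  omega

end Counting

lemma sum_le_sum_add_card_filter_mul {ι : Type*} (s : Finset ι) (p : ι → Prop) [DecidablePred p]
    {f g : ι → ℝ} {c : ℝ} (hgood : ∀ i ∈ s, ¬ p i → f i ≤ g i) (hbad : ∀ i ∈ s, f i ≤ c)
    (hg : ∀ i ∈ s, 0 ≤ g i) :
    ∑ i ∈ s, f i ≤ ∑ i ∈ s, g i + #{i ∈ s | p i} * c := by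
  rw [← sum_filter_add_sum_filter_not s p f]
  have h₁ : ∑ i ∈ s with p i, f i ≤ #{i ∈ s | p i} * c := by
    simpa using sum_le_card_nsmul _ f c fun i hi => hbad i (mem_filter.1 hi).1
  have h₂ : ∑ i ∈ s with ¬ p i, f i ≤ ∑ i ∈ s, g i :=
    (sum_le_sum fun i hi => hgood i (mem_filter.1 hi).1 (mem_filter.1 hi).2).trans
      (sum_le_sum_of_subset_of_nonneg (filter_subset _ _) fun i hi _ => hg i hi)
  linarith

namespace Oriented

variable {V : Type} [Fintype V] [DecidableEq V] {E : V → V → Prop} [DecidableRel E]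
  (hE : Oriented E) {u v : V}
include hE

lemma card_inter_le_pathCount_one : #(outNbhd E u ∩ inNbhd E v) ≤ pathCount E u v 1 := by
  refine card_le_card_of_injOn (fun x => ![u, x, v]) (fun x hx => ?_)
    (fun x _ y _ h => congrFun h 1)
  simp only [coe_inter, Set.mem_inter_iff, mem_coe, mem_outNbhd, mem_inNbhd] at hx
  obtain ⟨hux, hxv⟩ := hx
  have := hE.ne_of_adj hux
  have := hE.ne_of_adj hxv
  have := hE.ne_of_adj_adj hux hxv
  simp [Function.Injective, Fin.forall_fin_succ, *, Ne.symm]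

lemma card_edgesBetween_le_pathCount_two (huv : u ≠ v) (hne : ¬ E u v) :
    #(edgesBetween E (outNbhd E u) (inNbhd E v)) ≤ pathCount E u v 2 := by
  refine card_le_card_of_injOn (fun p => ![u, p.1, p.2, v]) (fun p hp => ?_)
    (fun p _ q _ h => Prod.ext (congrFun h 1) (congrFun h 2))
  simp only [edgesBetween, mem_coe, mem_filter, mem_product, mem_outNbhd,
    mem_inNbhd] at hp
  obtain ⟨⟨hux, hyv⟩, hxy⟩ := hp
  have := hE.ne_of_adj hux
  have := hE.ne_of_adj hxy
  have := hE.ne_of_adj hyv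
  have : u ≠ p.2 := by rintro h; exact hne (h ▸ hyv)
  have : p.1 ≠ v := by rintro h; exact hne (h ▸ hux)
  simp [Function.Injective, Fin.forall_fin_succ, *, Ne.symm]

lemma sum_card_inter_le_pathCount_three (huv : u ≠ v) (hne : ¬ E u v) :
    ∑ p ∈ outNbhd E u ×ˢ inNbhd E v, #(outNbhd E p.1 ∩ inNbhd E p.2) ≤ pathCount E u v 3 := by
  rw [← card_sigma]
  refine card_le_card_of_injOn (fun q => ![u, q.1.1, q.2, q.1.2, v]) (fun q hq => ?_)
    (fun q _ r _ h => ?_)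
  · simp only [coe_sigma, Set.mem_sigma_iff, mem_coe, mem_product, mem_inter, mem_outNbhd,
      mem_inNbhd] at hq
    obtain ⟨⟨hux, hyv⟩, hxc, hcy⟩ := hq
    have := hE.ne_of_adj hux
    have := hE.ne_of_adj hxc
    have := hE.ne_of_adj hcy
    have := hE.ne_of_adj hyv
    have := hE.ne_of_adj_adj hux hxc
    have := hE.ne_of_adj_adj hxc hcy
    have := hE.ne_of_adj_adj hcy hyv
    have : u ≠ q.1.2 := by rintro h; exact hne (h ▸ hyv)
    have : q.1.1 ≠ v := by rintro h; exact hne (h ▸ hux)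
    simp [Function.Injective, Fin.forall_fin_succ, *, Ne.symm]
  · obtain ⟨⟨x, y⟩, c⟩ := q
    obtain ⟨⟨x', y'⟩, c'⟩ := r
    obtain ⟨rfl, rfl, rfl⟩ : x = x' ∧ c = c' ∧ y = y' :=
      ⟨congrFun h 1, congrFun h 2, congrFun h 3⟩
    rfl

end Oriented

section Ore

variable {V : Type} [Fintype V] [DecidableEq V] {E : V → V → Prop} [DecidableRel E]

variable {m : ℝ}
  (hOre : ∀ x y, x ≠ y → ¬ E x y → m ≤ (degPlus E x : ℝ) + degMinus E y)
include hOre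

lemma Oriented.ore_degPlus_bound (hE : Oriented E) (u : V) :
    ((Fintype.card V : ℝ) - 1 - degPlus E u) * (m - degPlus E u) ≤ (Fintype.card V).choose 2 := by
  set D := (insert u (outNbhd E u))ᶜ
  have hu : u ∉ outNbhd E u := by simpa using hE.1 u
  have hD : (#D : ℝ) = Fintype.card V - 1 - degPlus E u := by
    have hle := card_le_univ (insert u (outNbhd E u))
    rw [card_insert_of_notMem hu] at hle
    rw [card_compl, card_insert_of_notMem hu, Nat.cast_sub hle, card_outNbhd]
    push_cast
    ring
  have hdeg : ∀ y ∈ D, m - degPlus E u ≤ (degMinus E y : ℝ) := fun y hy => by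
    simp only [D, mem_compl, mem_insert, mem_outNbhd, not_or] at hy
    linarith [hOre u y (Ne.symm hy.1) hy.2]
  calc ((Fintype.card V : ℝ) - 1 - degPlus E u) * (m - degPlus E u)
      ≤ ∑ y ∈ D, (degMinus E y : ℝ) := by
        simpa [hD] using card_nsmul_le_sum D (fun y => (degMinus E y : ℝ)) _ hdeg
    _ ≤ ∑ y, (degMinus E y : ℝ) := sum_le_sum_of_subset_of_nonneg (subset_univ D)
        fun _ _ _ => Nat.cast_nonneg _
    _ ≤ (Fintype.card V).choose 2 := by exact_mod_cast hE.sum_degMinus_le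

lemma Oriented.ore_degMinus_bound (hE : Oriented E) (v : V) :
    ((Fintype.card V : ℝ) - 1 - degMinus E v) * (m - degMinus E v) ≤ (Fintype.card V).choose 2 :=
  Oriented.ore_degPlus_bound (E := fun x y => E y x)
    (fun x y hxy hne => (hOre y x hxy.symm hne).trans_eq (add_comm _ _))
    ⟨hE.1, fun x y hxy hyx => hE.2 x y hyx hxy⟩ v

lemma card_inter_ge_of_ore (A B : Finset V) {x y : V} (hxy : x ≠ y) (hne : ¬ E x y) :
    m - #(A ∪ B)ᶜ - (#(outNbhd E x ∩ A) + #(outNbhd E x ∩ B) : ℝ)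
        - (#(inNbhd E y ∩ A) + #(inNbhd E y ∩ B))
      ≤ #(outNbhd E x ∩ inNbhd E y) := by
  have hcard : (#(outNbhd E x) + #(inNbhd E y) : ℝ) ≤ #(outNbhd E x ∩ inNbhd E y) + #(A ∪ B)ᶜ
      + (#(outNbhd E x ∩ A) + #(outNbhd E x ∩ B)) + (#(inNbhd E y ∩ A) + #(inNbhd E y ∩ B)) := by
    exact_mod_cast card_add_card_le (outNbhd E x) (inNbhd E y) A B
  have := hOre x y hxy hne
  rw [← card_outNbhd, ← card_inNbhd] at this
  linarith

lemma sum_card_inter_ge_of_ore (hm : 0 ≤ m) (A B : Finset V) :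
    (#A * #B : ℝ) * (m - #(A ∪ B)ᶜ)
        - #B * (#(edgesBetween E A A) + #(edgesBetween E A B))
        - #A * (#(edgesBetween E A B) + #(edgesBetween E B B))
        - (#(A ∩ B) + #(edgesBetween E A B)) * m
      ≤ ∑ p ∈ A ×ˢ B, (#(outNbhd E p.1 ∩ inNbhd E p.2) : ℝ) := by
  set f : V → ℝ := fun x => #(outNbhd E x ∩ A) + #(outNbhd E x ∩ B)
  set g : V → ℝ := fun y => #(inNbhd E y ∩ A) + #(inNbhd E y ∩ B)
  have hf : ∑ x ∈ A, f x = #(edgesBetween E A A) + #(edgesBetween E A B) := by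
    simp only [f, sum_add_distrib]
    exact_mod_cast congr_arg₂ (· + ·) (sum_card_inter_outNbhd E A A) (sum_card_inter_outNbhd E A B)
  have hg : ∑ y ∈ B, g y = #(edgesBetween E A B) + #(edgesBetween E B B) := by
    simp only [g, sum_add_distrib]
    exact_mod_cast congr_arg₂ (· + ·) (sum_card_inter_inNbhd E A B) (sum_card_inter_inNbhd E B B)
  have hsum : ∑ p ∈ A ×ˢ B, (m - #(A ∪ B)ᶜ - f p.1 - g p.2)
      = #A * #B * (m - #(A ∪ B)ᶜ) - #B * ∑ x ∈ A, f x - #A * ∑ y ∈ B, g y := by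
    rw [sum_sub_distrib, sum_sub_distrib, sum_const, card_product, sum_product, sum_product_right]
    simp only [sum_const, nsmul_eq_mul, mul_sum]
    push_cast
    ring
  have hbad : (#{p ∈ A ×ˢ B | p.1 = p.2 ∨ E p.1 p.2} : ℝ) ≤ #(A ∩ B) + #(edgesBetween E A B) := by
    exact_mod_cast card_filter_eq_or_adj_le A B
  have hle := sum_le_sum_add_card_filter_mul (A ×ˢ B) (fun p => p.1 = p.2 ∨ E p.1 p.2)
    (f := fun p => m - #(A ∪ B)ᶜ - f p.1 - g p.2) (c := m)
    (fun p _ hp => card_inter_ge_of_ore hOre A B (not_or.1 hp).1 (not_or.1 hp).2)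
    (fun p _ => by
      have : 0 ≤ (#(A ∪ B)ᶜ : ℝ) + f p.1 + g p.2 := by simp only [f, g]; positivity
      linarith)
    (fun _ _ => Nat.cast_nonneg _)
  rw [hsum, hf, hg] at hle
  linarith [mul_le_mul_of_nonneg_right hbad hm]

lemma Oriented.ore_le_pathCount_three (hE : Oriented E) (hm : 0 ≤ m)
    {u v : V} (huv : u ≠ v) (hne : ¬ E u v) :
    (degPlus E u : ℝ) * degMinus E v * (m - Fintype.card V + (degPlus E u + degMinus E v) / 2 + 1
          - #(outNbhd E u ∩ inNbhd E v))
        - (#(outNbhd E u ∩ inNbhd E v) + #(edgesBetween E (outNbhd E u) (inNbhd E v))) * m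
        - (degPlus E u + degMinus E v) * #(edgesBetween E (outNbhd E u) (inNbhd E v))
      ≤ pathCount E u v 3 := by
  set A := outNbhd E u
  set B := inNbhd E v
  have hsum := sum_card_inter_ge_of_ore hOre hm A B
  have hpath : ∑ p ∈ A ×ˢ B, (#(outNbhd E p.1 ∩ inNbhd E p.2) : ℝ) ≤ pathCount E u v 3 := by
    exact_mod_cast hE.sum_card_inter_le_pathCount_three huv hne
  have hcompl : (#(A ∪ B)ᶜ : ℝ) = Fintype.card V - #A - #B + #(A ∩ B) := by
    have h := card_union_add_card_inter A B
    rw [card_compl, Nat.cast_sub (card_le_univ _)]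
    linarith [(by exact_mod_cast h : (#(A ∪ B) : ℝ) + #(A ∩ B) = #A + #B)]
  have hAA := mul_le_mul_of_nonneg_left (hE.cast_card_edgesBetween_self_le A) (#B).cast_nonneg
  have hBB := mul_le_mul_of_nonneg_left (hE.cast_card_edgesBetween_self_le B) (#A).cast_nonneg
  rw [hcompl] at hsum
  rw [← card_outNbhd, ← card_inNbhd]
  linarith

end Ore

section Arithmetic

lemma le_of_ore_quadratic {n a : ℝ} (hn : 17 ≤ n)
    (h : (n - 1 - a) * ((3 * n - 3) / 4 - a) ≤ n * (n - 1) / 2) : n / 8 ≤ a := by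
  by_contra! ha
  have h₁ : 7 * n / 8 - 1 < n - 1 - a := by linarith
  have h₂ : 5 * n / 8 - 3 / 4 < (3 * n - 3) / 4 - a := by linarith
  nlinarith [mul_lt_mul'' h₁ h₂ (by linarith) (by linarith)]

lemma pos_of_ore_quadratic {n a b : ℕ} (hb : b + 2 ≤ n) (hab : (3 * n - 3) / 4 ≤ (a + b : ℝ))
    (h : ((n : ℝ) - 1 - a) * ((3 * n - 3) / 4 - a) ≤ n * (n - 1) / 2) : 0 < a := by
  rw [Nat.pos_iff_ne_zero]
  rintro rfl
  have hb' : (b : ℝ) + 2 ≤ n := by exact_mod_cast hb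
  push_cast at hab h
  nlinarith

lemma cube_div_le_of_large {n a b i e : ℝ} (hn : 17 ≤ n) (ha : n / 8 ≤ a) (hb : n / 8 ≤ b)
    (ha' : a ≤ n) (hb' : b ≤ n) (hab : (3 * n - 3) / 4 ≤ a + b) (hi : i ≤ n / 2 ^ 24)
    (he : 0 ≤ e) (he' : e ≤ n ^ 2 / 2 ^ 24) :
    n ^ 3 / 2 ^ 24 ≤
      a * b * ((3 * n - 3) / 4 - n + (a + b) / 2 + 1 - i) - (i + e) * ((3 * n - 3) / 4)
        - (a + b) * e := by
  have hX : n / 16 ≤ (3 * n - 3) / 4 - n + (a + b) / 2 + 1 - i := by linarith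
  have hab' : n / 8 * (n / 8) ≤ a * b := mul_le_mul ha hb (by linarith) (by linarith)
  have h₁ : n / 8 * (n / 8) * (n / 16) ≤ a * b * ((3 * n - 3) / 4 - n + (a + b) / 2 + 1 - i) :=
    mul_le_mul hab' hX (by linarith) (le_trans (by positivity) hab')
  have h₂ : (i + e) * ((3 * n - 3) / 4) ≤ (n / 2 ^ 24 + n ^ 2 / 2 ^ 24) * n :=
    mul_le_mul (by linarith) (by linarith) (by linarith) (by positivity)
  have h₃ : (a + b) * e ≤ (2 * n) * (n ^ 2 / 2 ^ 24) :=
    mul_le_mul (by linarith) he' he (by positivity)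
  nlinarith

lemma cube_div_le_of_small {n a b : ℝ} (hn : n < 17) (hn' : 2 ≤ n) (ha : 1 ≤ a) (hb : 1 ≤ b)
    (hab : (3 * n - 3) / 4 ≤ a + b) :
    n ^ 3 / 2 ^ 24 ≤ a * b * ((3 * n - 3) / 4 - n + (a + b) / 2 + 1) := by
  have hX : 1 / 8 ≤ (3 * n - 3) / 4 - n + (a + b) / 2 + 1 := by linarith
  have hab' : 1 * (1 / 8) ≤ a * b * ((3 * n - 3) / 4 - n + (a + b) / 2 + 1) :=
    mul_le_mul (one_le_mul_of_one_le_of_one_le ha hb) hX (by norm_num)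
      (mul_nonneg (by linarith) (by linarith))
  have hn3 : n ^ 3 ≤ 17 ^ 3 := pow_le_pow_left₀ (by linarith) hn.le 3
  linarith

lemma exists_ge_of_ore_counts (p : ℕ → ℝ) {n a b i e : ℕ} (ha : a + 2 ≤ n) (hb : b + 2 ≤ n)
    (hab : (3 * n - 3) / 4 ≤ (a + b : ℝ))
    (hu : ((n : ℝ) - 1 - a) * ((3 * n - 3) / 4 - a) ≤ n * (n - 1) / 2)
    (hv : ((n : ℝ) - 1 - b) * ((3 * n - 3) / 4 - b) ≤ n * (n - 1) / 2)
    (hp₁ : (i : ℝ) ≤ p 1) (hp₂ : (e : ℝ) ≤ p 2)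
    (hp₃ : a * b * ((3 * n - 3) / 4 - n + (a + b) / 2 + 1 - i) - (i + e) * ((3 * n - 3) / 4)
      - (a + b) * e ≤ p 3) :
    ∃ k, 1 ≤ k ∧ k ≤ 3 ∧ p k ≥ 2 ^ (-24 : ℤ) * n ^ k := by
  have hε : ∀ x : ℝ, (2 : ℝ) ^ (-24 : ℤ) * x = x / 2 ^ 24 := fun x => by
    rw [zpow_neg, div_eq_inv_mul]; norm_num
  simp only [hε, ge_iff_le]
  by_cases h₁ : (n : ℝ) ^ 1 / 2 ^ 24 ≤ p 1
  · exact ⟨1, le_rfl, by norm_num, h₁⟩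
  by_cases h₂ : (n : ℝ) ^ 2 / 2 ^ 24 ≤ p 2
  · exact ⟨2, by norm_num, by norm_num, h₂⟩
  refine ⟨3, by norm_num, le_rfl, ?_⟩
  rw [not_le] at h₁ h₂
  have ha' : (a : ℝ) + 2 ≤ n := by exact_mod_cast ha
  have hb' : (b : ℝ) + 2 ≤ n := by exact_mod_cast hb
  rcases le_or_gt 17 (n : ℝ) with hn | hn
  · refine (cube_div_le_of_large hn (le_of_ore_quadratic hn hu) (le_of_ore_quadratic hn hv)
      (by linarith) (by linarith) hab (by linarith) e.cast_nonneg
      (by linarith)).trans hp₃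
  · have hi : i = 0 := by
      have : (i : ℝ) < 1 := by nlinarith
      exact_mod_cast Nat.lt_one_iff.1 (by exact_mod_cast this)
    have he : e = 0 := by
      have : (e : ℝ) < 1 := by nlinarith
      exact_mod_cast Nat.lt_one_iff.1 (by exact_mod_cast this)
    subst hi he
    have hpos_a : (1 : ℝ) ≤ a := by exact_mod_cast pos_of_ore_quadratic hb hab hu
    have hpos_b : (1 : ℝ) ≤ b := by exact_mod_cast pos_of_ore_quadratic ha (by linarith) hv
    have := cube_div_le_of_small hn (by linarith) hpos_a hpos_b hab
    push_cast at hp₃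
    linarith

end Arithmetic

theorem stmt_2 {V : Type} [Fintype V] [DecidableEq V] (E : V → V → Prop) [DecidableRel E]
    (n : ℕ) (hn : Fintype.card V = n)
    (hor : Oriented E)
    (hOre : ∀ x y : V, x ≠ y → ¬ E x y →
      ((degPlus E x : ℝ) + (degMinus E y : ℝ)) ≥ (3 * n - 3) / 4)
    (u v : V) (huv : u ≠ v) (hne : ¬ E u v) :
    ∃ k : ℕ, 1 ≤ k ∧ k ≤ 3 ∧
      (pathCount E u v k : ℝ) ≥ (2 : ℝ) ^ (-24 : ℤ) * (n : ℝ) ^ k := by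
  subst hn
  have hu : u ∉ outNbhd E u := by simpa using hor.1 u
  have hv : v ∉ inNbhd E v := by simpa using hor.1 v
  have hm : (0 : ℝ) ≤ (3 * Fintype.card V - 3) / 4 := by
    have : (1 : ℝ) ≤ Fintype.card V := by exact_mod_cast Fintype.card_pos_iff.2 ⟨u⟩
    linarith
  refine exists_ge_of_ore_counts (fun k => pathCount E u v k) (a := degPlus E u) (b := degMinus E v)
    (card_add_two_le_card huv hu (by simpa using hne))
    (card_add_two_le_card huv (by simpa using hne) hv) (hOre u v huv hne)
    (by simpa [Nat.cast_choose_two] using hor.ore_degPlus_bound hOre u)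
    (by simpa [Nat.cast_choose_two] using hor.ore_degMinus_bound hOre v)
    (by exact_mod_cast hor.card_inter_le_pathCount_one)
    (by exact_mod_cast hor.card_edgesBetween_le_pathCount_two huv hne)
    (by simpa using hor.ore_le_pathCount_three hOre hm huv hne)
end

section
/- Let G be an oriented graph whose vertex set is partitioned into B, C, D, and suppose every vertex x ∈ B is 'good' in the sense that deg⁻_B(x) ≤ λ|B| + εn and deg⁺_B(x) ≤ λ|B| + εn, and suppose the Ore-degree condition holds. If e(B) ≤ 2λn·m for some integer m ≥ 0, then ((3n-3)/4)(|B|(|B|−1) − e(B)) ≤ (|B|−1)Σ_{x∈B} deg(x) ≤ |B|(|B|−1)(n − |B|) + 2|B|e(B), and consequently |B| ≤ (n+3)/4 + O(λ)m. -/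
open Finset

/-!
Summing the Ore condition over the `|B|(|B| - 1) - e(B)` ordered non-adjacent pairs of distinct
vertices of `B` counts every `x ∈ B` exactly `|B| - 1` times as a tail and as a head, which bounds
`(|B| - 1) Σ_{x ∈ B} deg x` from below. Orientation gives `deg x ≤ (n - |B|) + deg_B x`, which
bounds it from above. Comparing the two, `|B|(|B| - 1)(|B| - (n + 3)/4) ≤ ((3n - 3)/4 + 2|B|) e(B)`,
which is at most `(11/2) λ n² m`; if `|B| > (n + 3)/4` then `|B|(|B| - 1) ≥ n²/32`, whence the
constant `176 = 32 · 11/2`.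
-/

theorem Finset.sum_offDiag_add {α R : Type*} [DecidableEq α] [CommRing R] (s : Finset α)
    (f g : α → R) :
    ∑ p ∈ s.offDiag, (f p.1 + g p.2) = (#s - 1) * ∑ x ∈ s, (f x + g x) := by
  have h := sum_union (disjoint_diag_offDiag s) (f := fun p => f p.1 + g p.2)
  rw [diag_union_offDiag, sum_diag, sum_product] at h
  simp only [sum_add_distrib, sum_const, nsmul_eq_mul] at h ⊢
  rw [← mul_sum] at h
  linear_combination -h

section OrientedGraph

variable {V : Type} [DecidableEq V] (E : V → V → Prop) [DecidableRel E]

theorem edgesIn_eq_sum_card_out (B : Finset V) : edgesIn E B = ∑ x ∈ B, #{y ∈ B | E x y} := by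
  rw [edgesIn, card_filter, sum_product]
  exact sum_congr rfl fun x _ => (card_filter _ _).symm

theorem edgesIn_eq_sum_card_in (B : Finset V) : edgesIn E B = ∑ x ∈ B, #{y ∈ B | E y x} := by
  rw [edgesIn, card_filter, sum_product, sum_comm]
  exact sum_congr rfl fun x _ => (card_filter _ _).symm

theorem card_filter_offDiag_not (hE : ∀ x, ¬E x x) (B : Finset V) :
    (#{p ∈ B.offDiag | ¬E p.1 p.2} : ℝ) = #B * (#B - 1) - edgesIn E B := by
  have hedges : {p ∈ B.offDiag | E p.1 p.2} = {p ∈ B ×ˢ B | E p.1 p.2} := by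
    ext ⟨x, y⟩
    simp only [mem_filter, mem_offDiag, mem_product]
    exact ⟨fun ⟨⟨hx, hy, _⟩, hxy⟩ => ⟨⟨hx, hy⟩, hxy⟩,
      fun ⟨⟨hx, hy⟩, hxy⟩ => ⟨⟨hx, hy, fun h => hE x (h ▸ hxy)⟩, hxy⟩⟩
  have hsplit := card_filter_add_card_filter_not (s := B.offDiag) (fun p => E p.1 p.2)
  rw [hedges, offDiag_card, ← edgesIn] at hsplit
  have hcast := congrArg (Nat.cast : ℕ → ℝ) hsplit
  push_cast [Nat.cast_sub (Nat.le_mul_self #B)] at hcast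
  linarith

variable [Fintype V]

theorem degPlus_add_degMinus_le (hE : Oriented E) (B : Finset V) (x : V) :
    degPlus E x + degMinus E x ≤ #{y ∈ B | E x y} + #{y ∈ B | E y x} + #Bᶜ := by
  have hsplit (p : V → Prop) [DecidablePred p] :
      #{y | p y} = #{y ∈ B | p y} + #{y ∈ Bᶜ | p y} := by
    rw [← card_union_of_disjoint (disjoint_filter_filter disjoint_compl_right), ← filter_union,
      union_compl]
  have hout : #{y ∈ Bᶜ | E x y} + #{y ∈ Bᶜ | E y x} ≤ #Bᶜ := by
    rw [← card_union_of_disjoint (disjoint_filter.2 fun y _ hxy hyx => hE.2 x y hxy hyx)]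
    exact card_le_card (union_subset (filter_subset _ _) (filter_subset _ _))
  rw [degPlus, degMinus, hsplit, hsplit]
  omega

theorem sum_degPlus_add_degMinus_le (hE : Oriented E) (B : Finset V) :
    ∑ x ∈ B, ((degPlus E x : ℝ) + degMinus E x)
      ≤ #B * (Fintype.card V - #B) + 2 * edgesIn E B := by
  have hout : (edgesIn E B : ℝ) = ∑ x ∈ B, (#{y ∈ B | E x y} : ℝ) := by
    exact_mod_cast edgesIn_eq_sum_card_out E B
  have hin : (edgesIn E B : ℝ) = ∑ x ∈ B, (#{y ∈ B | E y x} : ℝ) := by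
    exact_mod_cast edgesIn_eq_sum_card_in E B
  calc ∑ x ∈ B, ((degPlus E x : ℝ) + degMinus E x)
      ≤ ∑ x ∈ B, ((#{y ∈ B | E x y} : ℝ) + #{y ∈ B | E y x} + #Bᶜ) :=
        sum_le_sum fun x _ => by exact_mod_cast degPlus_add_degMinus_le E hE B x
    _ = #B * (Fintype.card V - #B) + 2 * edgesIn E B := by
        rw [sum_add_distrib, sum_add_distrib, ← hout, ← hin, sum_const, nsmul_eq_mul, card_compl,
          Nat.cast_sub (card_le_univ B)]
        ring

theorem mul_sub_edgesIn_le_mul_sum_degPlus_add_degMinus (hE : ∀ x, ¬E x x) (B : Finset V)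
    (t : ℝ) (hore : ∀ x y : V, x ≠ y → ¬E x y → (degPlus E x : ℝ) + degMinus E y ≥ t) :
    t * (#B * (#B - 1) - edgesIn E B)
      ≤ (#B - 1) * ∑ x ∈ B, ((degPlus E x : ℝ) + degMinus E x) := by
  calc t * (#B * (#B - 1) - edgesIn E B)
      = ∑ _p ∈ B.offDiag with ¬E _p.1 _p.2, t := by
        rw [sum_const, nsmul_eq_mul, card_filter_offDiag_not E hE, mul_comm]
    _ ≤ ∑ p ∈ B.offDiag with ¬E p.1 p.2, ((degPlus E p.1 : ℝ) + degMinus E p.2) :=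
        sum_le_sum fun p hp => by
          obtain ⟨hp, hnot⟩ := mem_filter.1 hp
          exact hore p.1 p.2 (mem_offDiag.1 hp).2.2 hnot
    _ ≤ ∑ p ∈ B.offDiag, ((degPlus E p.1 : ℝ) + degMinus E p.2) :=
        sum_le_sum_of_subset_of_nonneg (filter_subset _ _) fun _ _ _ => by positivity
    _ = (#B - 1) * ∑ x ∈ B, ((degPlus E x : ℝ) + degMinus E x) :=
        sum_offDiag_add B (fun x => (degPlus E x : ℝ)) (fun x => (degMinus E x : ℝ))

theorem mul_sum_degPlus_add_degMinus_le (hE : Oriented E) (B : Finset V) :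
    (#B - 1) * ∑ x ∈ B, ((degPlus E x : ℝ) + degMinus E x)
      ≤ #B * (#B - 1) * (Fintype.card V - #B) + 2 * #B * edgesIn E B := by
  obtain rfl | hB := B.eq_empty_or_nonempty
  · simp
  have hB1 : (1 : ℝ) ≤ #B := by exact_mod_cast hB.card_pos
  have he : (0 : ℝ) ≤ edgesIn E B := by positivity
  nlinarith [mul_le_mul_of_nonneg_left (sum_degPlus_add_degMinus_le E hE B)
    (sub_nonneg.2 hB1)]

end OrientedGraph

theorem le_div_four_add_of_ore_bounds {b n : ℕ} {e c : ℝ} (hbn : b ≤ n) (he0 : 0 ≤ e)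
    (hc : 0 ≤ c) (he : e ≤ 2 * n * c)
    (h : (3 * (n : ℝ) - 3) / 4 * (b * (b - 1) - e) ≤ b * (b - 1) * (n - b) + 2 * b * e) :
    (b : ℝ) ≤ (n + 3) / 4 + 176 * c := by
  by_contra! hb
  have hbnR : (b : ℝ) ≤ n := by exact_mod_cast hbn
  have hδ : 0 < (b : ℝ) - (n + 3) / 4 := by linarith
  have hn : (2 : ℝ) ≤ n := by
    have : 1 < n := by exact_mod_cast (by linarith : (1 : ℝ) < n)
    exact_mod_cast this
  have hb1 : (1 : ℝ) ≤ b := by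
    have : 0 < b := by exact_mod_cast (by linarith : (0 : ℝ) < b)
    exact_mod_cast this
  have hcount : b * (b - 1) * ((b : ℝ) - (n + 3) / 4) ≤ ((3 * n - 3) / 4 + 2 * b) * e := by
    linarith
  have hedges : ((3 * (n : ℝ) - 3) / 4 + 2 * b) * e ≤ 176 * c * (n ^ 2 / 32) :=
    calc ((3 * (n : ℝ) - 3) / 4 + 2 * b) * e
        ≤ 11 * n / 4 * (2 * n * c) := by gcongr; linarith
      _ = 176 * c * (n ^ 2 / 32) := by ring
  have hprod : ((n : ℝ) + 3) / 4 * ((n - 1) / 4) ≤ b * (b - 1) :=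
    mul_le_mul (by linarith) (by linarith) (by linarith) (by linarith)
  have hsq : (n : ℝ) ^ 2 / 32 ≤ b * (b - 1) := by nlinarith
  have : ((b : ℝ) - (n + 3) / 4) * (n ^ 2 / 32) ≤ 176 * c * (n ^ 2 / 32) := by
    nlinarith [mul_le_mul_of_nonneg_left hsq hδ.le]
  have := le_of_mul_le_mul_right this (by positivity)
  linarith

theorem stmt_19 :
    ∃ K : ℝ, 0 < K ∧
    ∀ (V : Type) [Fintype V] [DecidableEq V] (E : V → V → Prop) [DecidableRel E],
    ∀ n : ℕ, Fintype.card V = n → Oriented E →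
    ∀ B C D : Finset V,
      Disjoint B C → Disjoint B D → Disjoint C D → B ∪ C ∪ D = Finset.univ →
      ∀ (lam eps : ℝ) (m : ℕ), 0 ≤ lam → 0 ≤ eps →
      -- every vertex of B is `good`
      (∀ x ∈ B, ((B.filter fun y => E y x).card : ℝ) ≤ lam * B.card + eps * n ∧
        ((B.filter fun y => E x y).card : ℝ) ≤ lam * B.card + eps * n) →
      -- the Ore-degree condition
      (∀ x y : V, x ≠ y → ¬ E x y →
        ((degPlus E x : ℝ) + (degMinus E y : ℝ)) ≥ (3 * n - 3) / 4) →
      (edgesIn E B : ℝ) ≤ 2 * lam * n * m →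
      ((3 * (n : ℝ) - 3) / 4 * ((B.card : ℝ) * ((B.card : ℝ) - 1) - (edgesIn E B : ℝ))
          ≤ ((B.card : ℝ) - 1) * ∑ x ∈ B, ((degPlus E x : ℝ) + (degMinus E x : ℝ))) ∧
      (((B.card : ℝ) - 1) * ∑ x ∈ B, ((degPlus E x : ℝ) + (degMinus E x : ℝ))
          ≤ (B.card : ℝ) * ((B.card : ℝ) - 1) * ((n : ℝ) - B.card)
            + 2 * (B.card : ℝ) * (edgesIn E B : ℝ)) ∧
      (B.card : ℝ) ≤ ((n : ℝ) + 3) / 4 + K * lam * m := by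
  refine ⟨176, by norm_num, ?_⟩
  rintro V _ _ E _ n rfl hE B - - - - - - lam - m hlam - - hore hedges
  have hlower := mul_sub_edgesIn_le_mul_sum_degPlus_add_degMinus E hE.1 B _ hore
  have hupper := mul_sum_degPlus_add_degMinus_le E hE B
  refine ⟨hlower, hupper, ?_⟩
  have hbound := le_div_four_add_of_ore_bounds (card_le_univ B) (Nat.cast_nonneg _)
    (by positivity : 0 ≤ lam * m) (by linarith) (hlower.trans hupper)
  linarith
end
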